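/- Let G be a group, α an automorphism of G, x ∈ G, H an α-invariant subgroup of G, and g ∈ G a coset representative such that A_{x,α} maps the coset gH into itself; write A_{x,α}(g) = g·h₀ with h₀ ∈ H. Then the action of A_{x,α} on gH is isomorphic to the action of A_{h₀, α|_H} on H: there exists a bijection φ : H → gH such that A_{x,α}(φ(h)) = φ(A_{h₀, α|_H}(h)) for all h ∈ H, where α|_H denotes the automorphism of H obtained by restricting α. -/

import Mathlib

open scoped Pointwise

/-- The bijective affine map `A_{x,α} : g ↦ x * α g` as a permutation of `G`. -/
def Aff {G : Type*} [Group G] (x : G) (α : G ≃* G) : Equiv.Perm G :=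
  α.toEquiv.trans (Equiv.mulLeft x)

theorem Aff_apply {G : Type*} [Group G] (x : G) (α : G ≃* G) (y : G) :
    Aff x α y = x * α y :=
  rfl

theorem Aff_mul_left {G : Type*} [Group G] {x g h₀ : G} {α : G ≃* G}
    (hg : Aff x α g = g * h₀) (y : G) : Aff x α (g * y) = g * Aff h₀ α y := by
  rw [Aff_apply] at hg
  rw [Aff_apply, Aff_apply, map_mul, ← mul_assoc, hg, mul_assoc]

theorem Aff_restrict_coe {G : Type*} [Group G] {H : Subgroup G} {α : G ≃* G} {αH : H ≃* H}
    (hαH : ∀ h : H, (αH h : G) = α (h : G)) (h₀ h : H) :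
    (Aff h₀ αH h : G) = Aff (h₀ : G) α h := by
  rw [Aff_apply, Aff_apply, Subgroup.coe_mul, hαH]

theorem stmt_15_general {G : Type*} [Group G] (α : G ≃* G) (x : G) (H : Subgroup G)
    -- `αH` is the restriction of `α` to an automorphism of `H`:
    (αH : H ≃* H) (hαH : ∀ h : H, (αH h : G) = α (h : G))
    (g : G)
    -- `A_{x,α}(g) = g * h₀` with `h₀ ∈ H`:
    (h₀ : H) (hh₀ : Aff x α g = g * (h₀ : G)) :
    ∃ φ : H ≃ (g • (H : Set G) : Set G),
      ∀ h : H, Aff x α (φ h : G) = (φ (Aff h₀ αH h) : G) := by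
  refine ⟨(Subgroup.leftCosetEquivSubgroup g).symm, fun h => ?_⟩
  change Aff x α (g * h) = g * (Aff h₀ αH h : G)
  rw [Aff_mul_left hh₀, Aff_restrict_coe hαH]

theorem stmt_15 {G : Type*} [Group G] (α : G ≃* G) (x : G) (H : Subgroup G)
    -- `H` is `α`-invariant:
    (hinv : ∀ g : G, α g ∈ H ↔ g ∈ H)
    -- `αH` is the restriction of `α` to an automorphism of `H`:
    (αH : H ≃* H) (hαH : ∀ h : H, (αH h : G) = α (h : G))
    (g : G)
    -- `A_{x,α}` maps the coset `gH` into itself: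
    (hmaps : ∀ y ∈ g • (H : Set G), Aff x α y ∈ g • (H : Set G))
    -- `A_{x,α}(g) = g * h₀` with `h₀ ∈ H`:
    (h₀ : H) (hh₀ : Aff x α g = g * (h₀ : G)) :
    ∃ φ : H ≃ (g • (H : Set G) : Set G),
      ∀ h : H, Aff x α (φ h : G) = (φ (Aff h₀ αH h) : G) :=
  stmt_15_general α x H αH hαH g h₀ hh₀
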